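/- arXiv:math/0607505 — 2 statements merged into one kernel-verified Lean document; each statement's English description precedes it below -/
import Mathlib

section
/- For all φ₁, φ₂ > 0 with φ := φ₁ + φ₂, the two-colour single-site measure ν_{φ₁,φ₂} is a probability measure on ℕ × ℕ, and its pushforward under the map (k,m) ↦ k + m equals μ_φ; that is, for every n ∈ ℕ, ∑_{k+m=n} ν_{φ₁,φ₂}({(k,m)}) = φ^n / (Z(φ) c(n)!). In other words, the two-colour invariant measure contracts to the colour-blind invariant measure. -/
noncomputable section

/-- `c(k)! = ∏_{m=1}^k c(m)`, with `c(0)! = 1`. -/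
def cfact (c : ℕ → ℝ) : ℕ → ℝ
  | 0 => 1
  | k + 1 => cfact c k * c (k + 1)

/-- The partition function `Z(φ) = ∑_{k ≥ 0} φ^k / c(k)!`. -/
def Zfun (c : ℕ → ℝ) (φ : ℝ) : ℝ := ∑' k : ℕ, φ ^ k / cfact c k

/-- The grand canonical single-site measure `μ_φ({k}) = φ^k / (Z(φ) c(k)!)`. -/
def mu (c : ℕ → ℝ) (φ : ℝ) (k : ℕ) : ℝ := φ ^ k / (Zfun c φ * cfact c k)

/-- The two-colour single-site measure
`ν_{φ₁,φ₂}({(k,m)}) = φ₁^k φ₂^m binom(k+m,k) / (c(k+m)! Z(φ₁+φ₂))`. -/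
def nu2 (c : ℕ → ℝ) (φ₁ φ₂ : ℝ) (p : ℕ × ℕ) : ℝ :=
  φ₁ ^ p.1 * φ₂ ^ p.2 * ((p.1 + p.2).choose p.1 : ℝ) /
    (cfact c (p.1 + p.2) * Zfun c (φ₁ + φ₂))

/-
On the antidiagonal `k + m = n` the weight `c(k+m)!` is constant, so the binomial theorem collapses
the fibre sum of `ν` to `(φ₁+φ₂)^n / (Z(φ) c(n)!) = μ_φ({n})`. Since `ν ≥ 0` and `ℕ × ℕ` is the
disjoint union of its finite antidiagonals, `ν` then sums to `∑ μ_φ = 1`. The only analytic input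
is the convergence of `Z(φ)`, which follows from the ratio test because (M) forces `c(k) → ∞`.
-/

open Filter Finset

theorem hasSum_of_hasSum_sum_antidiagonal {A : Type*} [AddCommMonoid A] [HasAntidiagonal A]
    {f : A × A → ℝ} {a : ℝ} (hf : 0 ≤ f)
    (h : HasSum (fun n => ∑ p ∈ antidiagonal n, f p) a) : HasSum f a := by
  let e := HasAntidiagonal.sigmaAntidiagonalEquivProd (A := A)
  have hfibre (n : A) : HasSum (fun p : antidiagonal n => f p) (∑ p ∈ antidiagonal n, f p) :=
    (antidiagonal n).hasSum f
  have hsummable : Summable (f ∘ e) :=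
    (summable_sigma_of_nonneg fun _ => hf _).2
      ⟨fun n => (hfibre n).summable, h.summable.congr fun n => ((hfibre n).tsum_eq).symm⟩
  rw [← e.hasSum_iff]
  have hsum := hsummable.hasSum
  rwa [← h.unique (hsum.sigma hfibre)] at hsum

theorem tendsto_atTop_of_le_sub_shift {c : ℕ → ℝ} {a : ℝ} {k₀ : ℕ} (hnonneg : ∀ k, 0 ≤ c k)
    (ha : 0 < a) (hshift : ∀ k, a ≤ c (k + k₀) - c k) : Tendsto c atTop atTop := by
  have hiter (k m : ℕ) : c k + m * a ≤ c (k + m * k₀) := by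
    induction m with
    | zero => simp
    | succ m ih =>
      rw [add_mul, one_mul, ← add_assoc]
      push_cast
      linarith [hshift (k + m * k₀)]
  refine tendsto_atTop_atTop.2 fun B => ?_
  obtain ⟨m, hm⟩ := exists_nat_ge (B / a)
  refine ⟨m * k₀, fun n hn => ?_⟩
  have hB : B ≤ m * a := (div_le_iff₀ ha).1 hm
  have := hiter (n - m * k₀) m
  rw [Nat.sub_add_cancel hn] at this
  linarith [hnonneg (n - m * k₀)]

section SingleSite

variable {c : ℕ → ℝ}

theorem cfact_pos (hcpos : ∀ k, 1 ≤ k → 0 < c k) (n : ℕ) : 0 < cfact c n := by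
  induction n with
  | zero => exact one_pos
  | succ n ih => exact mul_pos ih (hcpos (n + 1) n.succ_pos)

theorem Zfun_nonneg (hcpos : ∀ k, 1 ≤ k → 0 < c k) {φ : ℝ} (hφ : 0 ≤ φ) : 0 ≤ Zfun c φ :=
  tsum_nonneg fun n => div_nonneg (pow_nonneg hφ n) (cfact_pos hcpos n).le

theorem summable_pow_div_cfact (hc : Tendsto c atTop atTop) (ψ : ℝ) :
    Summable fun n => ψ ^ n / cfact c n := by
  refine summable_of_ratio_norm_eventually_le (r := 1 / 2) (by norm_num) ?_
  filter_upwards [(tendsto_add_atTop_iff_nat 1).2 hc |>.eventually_ge_atTop (2 * ‖ψ‖)]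
    with n hn
  have hratio : ‖ψ‖ / ‖c (n + 1)‖ ≤ 1 / 2 := by
    refine div_le_of_le_mul₀ (norm_nonneg _) (by norm_num) ?_
    linarith [Real.le_norm_self (c (n + 1))]
  calc ‖ψ ^ (n + 1) / cfact c (n + 1)‖
      = ‖ψ‖ / ‖c (n + 1)‖ * ‖ψ ^ n / cfact c n‖ := by
        simp only [cfact, norm_div, norm_mul, norm_pow]; ring
    _ ≤ 1 / 2 * ‖ψ ^ n / cfact c n‖ := by gcongr

theorem hasSum_mu (hcpos : ∀ k, 1 ≤ k → 0 < c k) (hc : Tendsto c atTop atTop) {φ : ℝ}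
    (hφ : 0 ≤ φ) : HasSum (mu c φ) 1 := by
  have hZ : 1 ≤ Zfun c φ := by
    simpa [cfact, Zfun] using (summable_pow_div_cfact hc φ).le_tsum 0
      fun n _ => div_nonneg (pow_nonneg hφ n) (cfact_pos hcpos n).le
  have hmu : mu c φ = fun n => φ ^ n / cfact c n / Zfun c φ := by
    funext n
    rw [mu, div_div, mul_comm]
  rw [hmu, ← div_self (zero_lt_one.trans_le hZ).ne']
  exact (summable_pow_div_cfact hc φ).hasSum.div_const _

theorem sum_range_nu2 {φ₁ φ₂ : ℝ} (n : ℕ) :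
    ∑ k ∈ range (n + 1), nu2 c φ₁ φ₂ (k, n - k) = mu c (φ₁ + φ₂) n := by
  have hfibre : ∀ k ∈ range (n + 1), nu2 c φ₁ φ₂ (k, n - k) =
      φ₁ ^ k * φ₂ ^ (n - k) * (n.choose k : ℝ) / (Zfun c (φ₁ + φ₂) * cfact c n) := by
    intro k hk
    rw [nu2, Nat.add_sub_cancel' (Nat.lt_succ_iff.1 (mem_range.1 hk)), mul_comm (cfact c n)]
  rw [sum_congr rfl hfibre, ← sum_div, ← add_pow, mu]

theorem nu2_nonneg (hcpos : ∀ k, 1 ≤ k → 0 < c k) {φ₁ φ₂ : ℝ} (h₁ : 0 ≤ φ₁) (h₂ : 0 ≤ φ₂)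
    (p : ℕ × ℕ) : 0 ≤ nu2 c φ₁ φ₂ p :=
  div_nonneg (by positivity)
    (mul_nonneg (cfact_pos hcpos _).le (Zfun_nonneg hcpos (add_nonneg h₁ h₂)))

theorem hasSum_nu2 (hcpos : ∀ k, 1 ≤ k → 0 < c k) (hc : Tendsto c atTop atTop) {φ₁ φ₂ : ℝ}
    (h₁ : 0 ≤ φ₁) (h₂ : 0 ≤ φ₂) : HasSum (nu2 c φ₁ φ₂) 1 := by
  refine hasSum_of_hasSum_sum_antidiagonal (nu2_nonneg hcpos h₁ h₂) ?_
  simp only [Nat.sum_antidiagonal_eq_sum_range_succ_mk, sum_range_nu2]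
  exact hasSum_mu hcpos hc (add_nonneg h₁ h₂)

end SingleSite

theorem stmt5_general (c : ℕ → ℝ) (a₂ : ℝ) (k₀ : ℕ)
    (hc0 : c 0 = 0) (hcpos : ∀ k : ℕ, 1 ≤ k → 0 < c k)
    (ha₂ : 0 < a₂)
    (hM : ∀ k : ℕ, a₂ ≤ c (k + k₀) - c k)
    (φ₁ φ₂ : ℝ) (h₁ : 0 < φ₁) (h₂ : 0 < φ₂) :
    (∀ p : ℕ × ℕ, 0 ≤ nu2 c φ₁ φ₂ p) ∧
    Summable (fun p : ℕ × ℕ => nu2 c φ₁ φ₂ p) ∧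
    (∑' p : ℕ × ℕ, nu2 c φ₁ φ₂ p) = 1 ∧
    ∀ n : ℕ, (∑ k ∈ Finset.range (n + 1), nu2 c φ₁ φ₂ (k, n - k)) =
      (φ₁ + φ₂) ^ n / (Zfun c (φ₁ + φ₂) * cfact c n) := by
  have hnonneg (k : ℕ) : 0 ≤ c k := by
    rcases k.eq_zero_or_pos with rfl | hk
    exacts [hc0.ge, (hcpos k hk).le]
  have hc := tendsto_atTop_of_le_sub_shift hnonneg ha₂ hM
  have hν := hasSum_nu2 hcpos hc h₁.le h₂.le
  exact ⟨nu2_nonneg hcpos h₁.le h₂.le, hν.summable, hν.tsum_eq, fun n => sum_range_nu2 n⟩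

/-- For all `φ₁, φ₂ > 0` with `φ = φ₁ + φ₂`, the two-colour single-site
measure `ν_{φ₁,φ₂}` is a probability measure on `ℕ × ℕ`, and its pushforward under
`(k,m) ↦ k + m` equals `μ_φ`: for every `n`, `∑_{k+m=n} ν_{φ₁,φ₂}({(k,m)}) = φ^n/(Z(φ) c(n)!)`. -/
theorem stmt5 (c : ℕ → ℝ) (a₁ a₂ : ℝ) (k₀ : ℕ)
    (hc0 : c 0 = 0) (hcpos : ∀ k : ℕ, 1 ≤ k → 0 < c k)
    (hLG : ∀ k : ℕ, |c (k + 1) - c k| ≤ a₁)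
    (hk₀ : 1 ≤ k₀) (ha₂ : 0 < a₂)
    (hM : ∀ k : ℕ, a₂ ≤ c (k + k₀) - c k)
    (φ₁ φ₂ : ℝ) (h₁ : 0 < φ₁) (h₂ : 0 < φ₂) :
    (∀ p : ℕ × ℕ, 0 ≤ nu2 c φ₁ φ₂ p) ∧
    Summable (fun p : ℕ × ℕ => nu2 c φ₁ φ₂ p) ∧
    (∑' p : ℕ × ℕ, nu2 c φ₁ φ₂ p) = 1 ∧
    ∀ n : ℕ, (∑ k ∈ Finset.range (n + 1), nu2 c φ₁ φ₂ (k, n - k)) =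
      (φ₁ + φ₂) ^ n / (Zfun c (φ₁ + φ₂) * cfact c n) :=
  stmt5_general c a₂ k₀ hc0 hcpos ha₂ hM φ₁ φ₂ h₁ h₂
end
end

section
/- For all φ₁, φ₂ > 0 and every m ∈ ℕ, the conditional law of the first coordinate of ν_{φ₁,φ₂} given that the second coordinate equals m is ν_{φ₁,φ₂}(η₁ = k | η₂ = m) = φ₁^k / (c_m(k)! Z_m(φ₁)), where c_m(k) := k·c(k+m)/(k+m) for k ≥ 1, c_m(k)! := ∏_{j=1}^{k} c_m(j) with c_m(0)! := 1, and Z_m(φ₁) := ∑_{k≥0} φ₁^k / c_m(k)! (this series converges). -/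
noncomputable section

/-- The conditioned rate `c_m(k) = k·c(k+m)/(k+m)` (equal to `0` when `k = 0`). -/
def cm (c : ℕ → ℝ) (m k : ℕ) : ℝ := (k : ℝ) * c (k + m) / ((k : ℝ) + (m : ℝ))

/-- `c_m(k)! = ∏_{j=1}^k c_m(j)`, with `c_m(0)! = 1`. -/
def cmfact (c : ℕ → ℝ) (m : ℕ) : ℕ → ℝ
  | 0 => 1
  | k + 1 => cmfact c m k * cm c m (k + 1)

section Aux

variable {c : ℕ → ℝ} {a₂ : ℝ} {k₀ : ℕ}

lemma my_cfact_pos (hcpos : ∀ k : ℕ, 1 ≤ k → 0 < c k) : ∀ k, 0 < cfact c k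
  | 0 => one_pos
  | k + 1 => mul_pos (my_cfact_pos hcpos k) (hcpos (k + 1) (Nat.succ_le_succ (Nat.zero_le k)))

lemma my_cm_pos (hcpos : ∀ k : ℕ, 1 ≤ k → 0 < c k) (m k : ℕ) : 0 < cm c m (k + 1) := by
  unfold cm
  apply div_pos
  · apply mul_pos
    · positivity
    · exact hcpos _ (by omega)
  · push_cast; positivity

lemma my_cmfact_pos (hcpos : ∀ k : ℕ, 1 ≤ k → 0 < c k) (m : ℕ) : ∀ k, 0 < cmfact c m k
  | 0 => one_pos
  | k + 1 => mul_pos (my_cmfact_pos hcpos m k) (my_cm_pos hcpos m k)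

lemma my_c_nonneg (hc0 : c 0 = 0) (hcpos : ∀ k : ℕ, 1 ≤ k → 0 < c k) (n : ℕ) : 0 ≤ c n := by
  cases n with
  | zero => rw [hc0]
  | succ n => exact (hcpos (n + 1) (by omega)).le

lemma my_c_add_mul (hM : ∀ k : ℕ, a₂ ≤ c (k + k₀) - c k) :
    ∀ (j n : ℕ), c n + j * a₂ ≤ c (n + j * k₀) := by
  intro j
  induction j with
  | zero => simp
  | succ j ih =>
    intro n
    have h1 := ih n
    have h2 := hM (n + j * k₀)
    push_cast
    have : n + (j + 1) * k₀ = n + j * k₀ + k₀ := by ring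
    rw [this]
    nlinarith

lemma my_c_large (hc0 : c 0 = 0) (hcpos : ∀ k : ℕ, 1 ≤ k → 0 < c k)
    (hk₀ : 1 ≤ k₀) (ha₂ : 0 < a₂) (hM : ∀ k : ℕ, a₂ ≤ c (k + k₀) - c k) (B : ℝ) :
    ∃ N : ℕ, ∀ n ≥ N, B ≤ c n := by
  obtain ⟨j, hj⟩ := exists_nat_ge (B / a₂)
  refine ⟨j * k₀, fun n hn => ?_⟩
  have hjd : j ≤ n / k₀ := (Nat.le_div_iff_mul_le (by omega)).mpr hn
  have h1 := my_c_add_mul hM (n / k₀) (n % k₀)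
  rw [Nat.mod_add_div' n k₀] at h1
  have h0 : 0 ≤ c (n % k₀) := my_c_nonneg hc0 hcpos _
  have hB : B ≤ j * a₂ := (div_le_iff₀ ha₂).mp hj
  have : (j : ℝ) * a₂ ≤ (n / k₀ : ℕ) * a₂ := by
    apply mul_le_mul_of_nonneg_right _ ha₂.le
    exact_mod_cast hjd
  linarith

lemma my_ratio_step {φ F d : ℝ} (hφ : 0 < φ) (hF : 0 < F) (hd : 0 < d) (h : 2 * φ ≤ d)
    (k : ℕ) : φ ^ (k + 1) / (F * d) ≤ 1 / 2 * (φ ^ k / F) := by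
  have h2 : (1:ℝ)/2 * (φ ^ k / F) = φ ^ k / (2 * F) := by ring
  rw [h2, div_le_div_iff₀ (by positivity) (by positivity), pow_succ]
  have hp := pow_pos hφ k
  nlinarith [mul_pos hp hF]

lemma my_key (c : ℕ → ℝ) (m : ℕ) :
    ∀ k : ℕ, cmfact c m k * (cfact c m * ((k + m).choose k : ℝ)) = cfact c (k + m) := by
  intro k
  induction k with
  | zero => simp [cmfact]
  | succ k ih =>
    have e : k + 1 + m = (k + m) + 1 := by omega
    have hchoose : ((k + m + 1).choose (k + 1) : ℝ) * ((k : ℝ) + 1) =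
        ((k : ℝ) + m + 1) * ((k + m).choose k : ℝ) := by
      have h0 := Nat.add_one_mul_choose_eq (k + m) k
      have h0' : ((k + m + 1) * (k + m).choose k : ℕ)
          = ((k + m + 1).choose (k + 1) * (k + 1) : ℕ) := by
        simpa [Nat.succ_eq_add_one] using h0
      have := (congrArg (fun n : ℕ => (n : ℝ)) h0').symm
      push_cast at this
      linarith
    have hne : ((k : ℝ) + 1 + (m : ℝ)) ≠ 0 := by positivity
    show cmfact c m k * cm c m (k + 1) * (cfact c m * ((k + 1 + m).choose (k + 1) : ℝ))
        = cfact c (k + 1 + m)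
    unfold cm
    rw [e, show cfact c (k + m + 1) = cfact c (k + m) * c (k + m + 1) from rfl, ← ih]
    have hmain : ((k + 1 : ℕ) : ℝ) * c (k + m + 1) / (((k + 1 : ℕ) : ℝ) + (m : ℝ))
        * ((k + m + 1).choose (k + 1) : ℝ)
        = ((k + m).choose k : ℝ) * c (k + m + 1) := by
      rw [div_mul_eq_mul_div, div_eq_iff (by push_cast; positivity)]
      push_cast
      linear_combination c (k + m + 1) * hchoose
    calc cmfact c m k * (((k + 1 : ℕ) : ℝ) * c (k + m + 1) / (((k + 1 : ℕ) : ℝ) + (m : ℝ)))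
          * (cfact c m * ((k + m + 1).choose (k + 1) : ℝ))
        = cmfact c m k * cfact c m
          * (((k + 1 : ℕ) : ℝ) * c (k + m + 1) / (((k + 1 : ℕ) : ℝ) + (m : ℝ))
            * ((k + m + 1).choose (k + 1) : ℝ)) := by ring
      _ = cmfact c m k * cfact c m * (((k + m).choose k : ℝ) * c (k + m + 1)) := by rw [hmain]
      _ = cmfact c m k * (cfact c m * ((k + m).choose k : ℝ)) * c (k + m + 1) := by ring

end Aux


/-- For all `φ₁, φ₂ > 0` and every `m ∈ ℕ`, the conditional law of the
first coordinate of `ν_{φ₁,φ₂}` given that the second coordinate equals `m` is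
`ν(η₁ = k | η₂ = m) = φ₁^k / (c_m(k)! Z_m(φ₁))`, where
`Z_m(φ₁) = ∑_{k≥0} φ₁^k / c_m(k)!` (and this series converges). -/
theorem stmt6 (c : ℕ → ℝ) (a₁ a₂ : ℝ) (k₀ : ℕ)
    (hc0 : c 0 = 0) (hcpos : ∀ k : ℕ, 1 ≤ k → 0 < c k)
    (hLG : ∀ k : ℕ, |c (k + 1) - c k| ≤ a₁)
    (hk₀ : 1 ≤ k₀) (ha₂ : 0 < a₂)
    (hM : ∀ k : ℕ, a₂ ≤ c (k + k₀) - c k)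
    (φ₁ φ₂ : ℝ) (h₁ : 0 < φ₁) (h₂ : 0 < φ₂) (m : ℕ) :
    Summable (fun k : ℕ => φ₁ ^ k / cmfact c m k) ∧
    ∀ k : ℕ,
      nu2 c φ₁ φ₂ (k, m) / (∑' j : ℕ, nu2 c φ₁ φ₂ (j, m)) =
        φ₁ ^ k / (cmfact c m k * ∑' j : ℕ, φ₁ ^ j / cmfact c m j) := by
  have hcf := my_cfact_pos hcpos
  have hcmf := my_cmfact_pos hcpos m
  -- summability of the Z-series
  have hZsum : Summable (fun k : ℕ => (φ₁ + φ₂) ^ k / cfact c k) := by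
    obtain ⟨N, hN⟩ := my_c_large hc0 hcpos hk₀ ha₂ hM (2 * (φ₁ + φ₂))
    apply summable_of_ratio_norm_eventually_le (r := 1/2) (by norm_num)
    filter_upwards [Filter.eventually_ge_atTop N] with k hk
    have hc : 2 * (φ₁ + φ₂) ≤ c (k + 1) := hN (k + 1) (by omega)
    have hpos : 0 < (φ₁ + φ₂) ^ k / cfact c k := div_pos (by positivity) (hcf k)
    have hpos' : 0 < (φ₁ + φ₂) ^ (k + 1) / cfact c (k + 1) := div_pos (by positivity) (hcf _)
    rw [Real.norm_eq_abs, Real.norm_eq_abs, abs_of_pos hpos', abs_of_pos hpos]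
    have hck : 0 < c (k + 1) := hcpos _ (by omega)
    show (φ₁ + φ₂) ^ (k + 1) / cfact c (k + 1) ≤ 1 / 2 * ((φ₁ + φ₂) ^ k / cfact c k)
    rw [show cfact c (k + 1) = cfact c k * c (k + 1) from rfl]
    exact my_ratio_step (by linarith) (hcf k) hck hc k
  -- summability of the cm-series
  have hsum : Summable (fun k : ℕ => φ₁ ^ k / cmfact c m k) := by
    obtain ⟨N, hN⟩ := my_c_large hc0 hcpos hk₀ ha₂ hM (4 * φ₁)
    apply summable_of_ratio_norm_eventually_le (r := 1/2) (by norm_num)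
    filter_upwards [Filter.eventually_ge_atTop (N + m)] with k hk
    have hcm : 2 * φ₁ ≤ cm c m (k + 1) := by
      unfold cm
      have hc : 4 * φ₁ ≤ c (k + 1 + m) := hN (k + 1 + m) (by omega)
      have hden : (0:ℝ) < (k + 1 : ℕ) + m := by positivity
      rw [le_div_iff₀ hden]
      have hkm : (m : ℝ) ≤ (k + 1 : ℕ) := by exact_mod_cast (by omega : m ≤ k + 1)
      have h1 : ((k + 1 : ℕ) : ℝ) + m ≤ 2 * ((k + 1 : ℕ) : ℝ) := by linarith
      have h2 : (0:ℝ) ≤ ((k+1:ℕ):ℝ) := by positivity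
      nlinarith
    have hpos : 0 < φ₁ ^ k / cmfact c m k := div_pos (by positivity) (hcmf k)
    have hpos' : 0 < φ₁ ^ (k + 1) / cmfact c m (k + 1) := div_pos (by positivity) (hcmf _)
    rw [Real.norm_eq_abs, Real.norm_eq_abs, abs_of_pos hpos', abs_of_pos hpos]
    show φ₁ ^ (k + 1) / cmfact c m (k + 1) ≤ 1 / 2 * (φ₁ ^ k / cmfact c m k)
    rw [show cmfact c m (k + 1) = cmfact c m k * cm c m (k + 1) from rfl]
    exact my_ratio_step h₁ (hcmf k) (my_cm_pos hcpos m k) hcm k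
  refine ⟨hsum, fun k => ?_⟩
  -- positivity of Z
  have hZpos : 0 < Zfun c (φ₁ + φ₂) := by
    unfold Zfun
    apply Summable.tsum_pos hZsum (fun i => le_of_lt (div_pos (by positivity) (hcf i))) 0
    simp [cfact]
  set A : ℝ := φ₂ ^ m / (cfact c m * Zfun c (φ₁ + φ₂)) with hA
  have hApos : 0 < A := div_pos (by positivity) (mul_pos (hcf m) hZpos)
  have hrepr : ∀ j : ℕ, nu2 c φ₁ φ₂ (j, m) = A * (φ₁ ^ j / cmfact c m j) := by
    intro j
    unfold nu2
    simp only
    have h1 := hcmf j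
    have h2 := hcf m
    have h3 : (0:ℝ) < ((j + m).choose j : ℝ) := by
      exact_mod_cast Nat.choose_pos (Nat.le_add_right j m)
    rw [← my_key c m j, hA, div_mul_div_comm, div_eq_div_iff
      (mul_pos (mul_pos h1 (mul_pos h2 h3)) hZpos).ne'
      (mul_pos (mul_pos h2 hZpos) h1).ne']
    ring
  have htsum : (∑' j : ℕ, nu2 c φ₁ φ₂ (j, m)) = A * ∑' j : ℕ, φ₁ ^ j / cmfact c m j := by
    rw [← tsum_mul_left]
    exact tsum_congr hrepr
  rw [hrepr k, htsum, mul_div_mul_left _ _ (ne_of_gt hApos), div_div]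
end
end
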